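/- Let f(n) denote the number of length-n factors of the Thue-Morse word with intertwining sequence (AB)^ω, and let a(n) = A006165(n), the sequence satisfying a(1)=a(2)=1, a(2n)=2a(n) for n≥2, a(2n+1)=a(n+1)+a(n) for n≥1. Then f(n+1) = 2·a(n) for all n ≥ 1. -/

import Mathlib

open scoped Classical

/-- The Thue-Morse word: parity of the binary digit sum. -/
def tm (n : ℕ) : ℕ := (Nat.digits 2 n).sum % 2

/-- `t[j..j+n-1] = t[i..i+n-1]` : an occurrence at `j` of the factor `t[i..i+n-1]`. -/
def feq (i j n : ℕ) : Prop := ∀ k < n, tm (j + k) = tm (i + k)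

/-- `t[j..j+n-1]` is the binary complement of `t[i..i+n-1]`. -/
def feqc (i j n : ℕ) : Prop := ∀ k < n, tm (j + k) = 1 - tm (i + k)

/-- Positions of occurrences of `x = t[i..i+n-1]` or its complement. -/
def occSet (i n : ℕ) : ℕ → Prop := fun j => feq i j n ∨ feqc i j n

/-- The intertwining sequence of `x = t[i..i+n-1]`: at index `m`, the label of the
`m`-th (in increasing order of position) occurrence of `x` or its complement;
`0` codes `A` (an occurrence of `x`), `1` codes `B` (an occurrence of the complement). -/
noncomputable def itw (i n m : ℕ) : ℕ :=
  if feq i (Nat.nth (occSet i n) m) n then 0 else 1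

/-- The intertwining sequence is `(AB)^ω`. -/
def ABpat (i n : ℕ) : Prop := ∀ m, itw i n m = m % 2

/-- The intertwining sequence is `(BA)^ω`. -/
def BApat (i n : ℕ) : Prop := ∀ m, itw i n m = (m + 1) % 2

/-- The intertwining sequence is `(ABBA)^ω`. -/
def ABBApat (i n : ℕ) : Prop :=
  ∀ m, itw i n m = if m % 4 = 0 ∨ m % 4 = 3 then 0 else 1

/-- The intertwining sequence is `(BAAB)^ω`. -/
def BAABpat (i n : ℕ) : Prop :=
  ∀ m, itw i n m = if m % 4 = 0 ∨ m % 4 = 3 then 1 else 0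

/-- The length-`n` factor of the Thue-Morse word starting at position `i`, as a word. -/
def fac (i n : ℕ) : List ℕ := (List.range n).map (fun k => tm (i + k))

/-- Number of length-`n` factors of the Thue-Morse word with intertwining
sequence (AB)^ω. -/
noncomputable def fcount (n : ℕ) : ℕ :=
  Set.ncard {w : List ℕ | ∃ i, fac i n = w ∧ ABpat i n}

/-- Number of length-`n` factors of the Thue-Morse word with intertwining
sequence (ABBA)^ω. -/
noncomputable def gcount (n : ℕ) : ℕ :=
  Set.ncard {w : List ℕ | ∃ i, fac i n = w ∧ ABBApat i n}


lemma tm_lt_two (n : ℕ) : tm n < 2 := Nat.mod_lt _ (by norm_num)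

lemma tm_zero : tm 0 = 0 := by norm_num [tm]

lemma tm_two_mul (n : ℕ) : tm (2 * n) = tm n := by
  rcases Nat.eq_zero_or_pos n with h | h
  · simp [h, tm]
  · unfold tm
    rw [Nat.digits_def' (by norm_num : 1 < 2) (by omega)]
    simp [Nat.mul_div_cancel_left _ (by norm_num : 0 < 2), Nat.mul_mod_right]

lemma tm_two_mul_add_one (n : ℕ) : tm (2 * n + 1) = 1 - tm n := by
  unfold tm
  rw [Nat.digits_def' (by norm_num : 1 < 2) (by omega)]
  have h2 : (2*n+1) % 2 = 1 := by omega
  have h3 : (2*n+1) / 2 = n := by omega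
  rw [h2, h3]
  simp only [List.sum_cons]
  have := Nat.mod_lt ((Nat.digits 2 n).sum) (show 0 < 2 by norm_num)
  omega

/-- adjacent equal values occur only at odd positions -/
lemma eq_adj_odd {j : ℕ} (h : tm j = tm (j + 1)) : j % 2 = 1 := by
  rcases Nat.even_or_odd j with ⟨r, hr⟩ | ⟨r, hr⟩
  · subst hr
    have h1 := tm_two_mul r
    have h2 := tm_two_mul_add_one r
    have h3 := tm_lt_two r
    rw [show r + r = 2 * r by ring] at h
    rw [show 2 * r + 1 = 2*r+1 from rfl] at h
    omega
  · omega

/-- in any window of 5 there is an adjacent equal pair -/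
lemma pair_in_window (r : ℕ) :
    tm (2*r+1) = tm (2*r+2) ∨ tm (2*r+3) = tm (2*r+4) := by
  by_contra hcon
  push_neg at hcon
  obtain ⟨h1, h2⟩ := hcon
  have e1 := tm_two_mul_add_one r
  have e2 : tm (2*r+2) = tm (r+1) := by rw [show 2*r+2 = 2*(r+1) by ring, tm_two_mul]
  have e3 : tm (2*r+3) = 1 - tm (r+1) := by
    rw [show 2*r+3 = 2*(r+1)+1 by ring, tm_two_mul_add_one]
  have e4 : tm (2*r+4) = tm (r+2) := by rw [show 2*r+4 = 2*(r+2) by ring, tm_two_mul]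
  have b1 := tm_lt_two r; have b2 := tm_lt_two (r+1); have b3 := tm_lt_two (r+2)
  -- derive tm r = tm (r+1) = tm (r+2), contradiction with eq_adj_odd
  have q1 : tm r = tm (r+1) := by omega
  have q2 : tm (r+1) = tm (r+2) := by omega
  have o1 := eq_adj_odd q1
  have o2 := eq_adj_odd q2
  omega

/-- an alternating window of length 4 cannot start at an odd position -/
lemma odd_alt_false (r : ℕ) (h0 : tm (2*r+1) ≠ tm (2*r+2)) (h2 : tm (2*r+3) ≠ tm (2*r+4)) :
    False := by
  have e1 := tm_two_mul_add_one r
  have e2 : tm (2*r+2) = tm (r+1) := by rw [show 2*r+2 = 2*(r+1) by ring, tm_two_mul]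
  have e3 : tm (2*r+3) = 1 - tm (r+1) := by
    rw [show 2*r+3 = 2*(r+1)+1 by ring, tm_two_mul_add_one]
  have e4 : tm (2*r+4) = tm (r+2) := by rw [show 2*r+4 = 2*(r+2) by ring, tm_two_mul]
  have b1 := tm_lt_two r; have b2 := tm_lt_two (r+1); have b3 := tm_lt_two (r+2)
  have q1 : tm r = tm (r+1) := by omega
  have q2 : tm (r+1) = tm (r+2) := by omega
  have o1 := eq_adj_odd q1
  have o2 := eq_adj_odd q2
  omega

lemma tm_pow_mul_add (k m r : ℕ) (h : r < 2 ^ k) :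
    tm (2 ^ k * m + r) = (tm m + tm r) % 2 := by
  induction k generalizing m r with
  | zero =>
    interval_cases r
    simp [tm_zero]
    exact (Nat.mod_eq_of_lt (tm_lt_two m)).symm
  | succ k ih =>
    rcases Nat.even_or_odd r with ⟨r', hr⟩ | ⟨r', hr⟩
    · subst hr
      have : 2 ^ (k+1) * m + (r' + r') = 2 * (2 ^ k * m + r') := by ring
      rw [this, tm_two_mul, ih m r' (by omega),
        show r' + r' = 2 * r' by ring, tm_two_mul]
    · subst hr
      have : 2 ^ (k+1) * m + (2 * r' + 1) = 2 * (2 ^ k * m + r') + 1 := by ring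
      rw [this, tm_two_mul_add_one, ih m r' (by omega), tm_two_mul_add_one]
      have b1 := tm_lt_two m; have b2 := tm_lt_two r'
      omega

lemma tm_three_pow (v : ℕ) : tm (3 * 2 ^ v) = 0 := by
  induction v with
  | zero => norm_num [tm]
  | succ v ih => rw [show 3 * 2 ^ (v+1) = 2 * (3 * 2 ^ v) by ring, tm_two_mul, ih]

-- ### synchronization
lemma sync_pair {i n : ℕ} (hpair : ∃ k, k + 1 < n ∧ tm (i+k) = tm (i+k+1)) :
    ∀ j, occSet i n j → j % 2 = i % 2 := by
  obtain ⟨k, hk, hpk⟩ := hpair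
  intro j hj
  have hik : (i + k) % 2 = 1 := eq_adj_odd (by rw [show i+k+1 = i+(k+1) by ring] at hpk; exact (by rw [show i+(k+1)= i+k+1 by ring] at hpk; exact hpk))
  have hjk : (j + k) % 2 = 1 := by
    rcases hj with hf | hc
    · have h1 := hf k (by omega)
      have h2 := hf (k+1) (by omega)
      exact eq_adj_odd (by rw [show j+k+1 = j+(k+1) by ring]; rw [h1, h2, show i+(k+1) = i+k+1 by ring]; exact hpk)
    · have h1 := hc k (by omega)
      have h2 := hc (k+1) (by omega)
      refine eq_adj_odd ?_
      rw [show j+k+1 = j+(k+1) by ring, h1, h2, show i+(k+1) = i+k+1 by ring, hpk]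
  omega

lemma sync4 {i n : ℕ} (hn : 4 ≤ n) : ∀ j, occSet i n j → j % 2 = i % 2 := by
  by_cases hpair : ∃ k, k + 1 < n ∧ tm (i+k) = tm (i+k+1)
  · exact sync_pair hpair
  · push_neg at hpair
    -- the window at i alternates; show i is even and every occurrence is even
    have halt : ∀ x n', (∀ k, k + 1 < n' → tm (x+k) ≠ tm (x+k+1)) → 4 ≤ n' → x % 2 = 0 := by
      intro x n' hx hn'
      rcases Nat.even_or_odd x with ⟨r, hr⟩ | ⟨r, hr⟩
      · omega
      · exfalso
        have h0 := hx 0 (by omega)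
        have h2 := hx 2 (by omega)
        rw [hr] at h0 h2
        exact odd_alt_false r
          (by rw [show 2*r+1 = 2*r+1+0 by ring, show 2*r+2 = 2*r+1+0+1 by ring]; exact h0)
          (by rw [show 2*r+3 = 2*r+1+2 by ring, show 2*r+4 = 2*r+1+2+1 by ring]; exact h2)
    have hi : i % 2 = 0 := halt i n hpair hn
    intro j hj
    have hj0 : j % 2 = 0 := by
      refine halt j n ?_ hn
      intro k hk
      rcases hj with hf | hc
      · have h1 := hf k (by omega)
        have h2 := hf (k+1) (by omega)
        rw [show j+k+1 = j+(k+1) by ring, h1, h2, show i+(k+1) = i+k+1 by ring]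
        exact hpair k hk
      · have h1 := hc k (by omega)
        have h2 := hc (k+1) (by omega)
        have hp := hpair k hk
        have b1 := tm_lt_two (i+k); have b2 := tm_lt_two (i+k+1)
        rw [show j+k+1 = j+(k+1) by ring, h1, h2, show i+(k+1) = i+k+1 by ring]
        omega
    omega

-- ### infinitude of occurrence sets
lemma occ_infinite (i n : ℕ) : {j | occSet i n j}.Infinite := by
  apply Set.infinite_of_forall_exists_gt
  intro a
  set K := a + i + n + 1 with hK
  refine ⟨3 * 2 ^ K + i, ?_, ?_⟩
  · refine Or.inl ?_
    intro k hk
    have hlt : i + k < 2 ^ K := by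
      calc i + k < K := by omega
      _ < 2 ^ K := Nat.lt_two_pow_self (n := K)
    have : 3 * 2 ^ K + i + k = 2 ^ K * 3 + (i + k) := by ring
    rw [this, tm_pow_mul_add K 3 (i+k) hlt]
    rw [show (3:ℕ) = 3 * 2 ^ 0 by norm_num, tm_three_pow]
    simp [Nat.mod_eq_of_lt (tm_lt_two (i+k))]
  · have : K < 2 ^ K := Nat.lt_two_pow_self (n := K)
    omega

-- ### transport of nth along doubling maps
lemma count_shift {p q : ℕ → Prop} (c : ℕ) (hc : c < 2)
    (hsub : ∀ x, q x → x % 2 = c) (hiff : ∀ j, p j ↔ q (2*j + c)) (j : ℕ) :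
    Nat.count q (2*j + c) = Nat.count p j := by
  classical
  rw [Nat.count_eq_card_filter_range, Nat.count_eq_card_filter_range]
  have himg : Finset.filter q (Finset.range (2*j+c)) =
      Finset.image (fun x => 2*x + c) (Finset.filter p (Finset.range j)) := by
    ext x
    simp only [Finset.mem_filter, Finset.mem_range, Finset.mem_image]
    constructor
    · rintro ⟨hx, hqx⟩
      have hmod := hsub x hqx
      refine ⟨x / 2, ⟨by omega, ?_⟩, by omega⟩
      rw [hiff]
      have : 2 * (x/2) + c = x := by omega
      rw [this]; exact hqx
    · rintro ⟨y, ⟨hy, hpy⟩, rfl⟩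
      exact ⟨by omega, (hiff y).1 hpy⟩
  rw [himg, Finset.card_image_of_injective _ (fun a b hab => by omega)]

lemma nth_shift {p q : ℕ → Prop} (c : ℕ) (hc : c < 2)
    (hp : {j | p j}.Infinite)
    (hsub : ∀ x, q x → x % 2 = c) (hiff : ∀ j, p j ↔ q (2*j + c)) (m : ℕ) :
    Nat.nth q m = 2 * Nat.nth p m + c := by
  classical
  have hmem : p (Nat.nth p m) := Nat.nth_mem_of_infinite hp m
  have hqmem : q (2 * Nat.nth p m + c) := (hiff _).1 hmem
  have hcount : Nat.count q (2 * Nat.nth p m + c) = m := by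
    rw [count_shift c hc hsub hiff, Nat.count_nth_of_infinite hp]
  have := Nat.nth_count hqmem
  rw [hcount] at this
  exact this

-- ### desubstitution
lemma feq_even (i' j n : ℕ) : feq (2*i') (2*j) n ↔ feq i' j ((n+1)/2) := by
  constructor
  · intro h l hl
    have h1 := h (2*l) (by omega)
    rwa [show 2*j+2*l = 2*(j+l) by ring, show 2*i'+2*l = 2*(i'+l) by ring,
      tm_two_mul, tm_two_mul] at h1
  · intro h k hk
    rcases Nat.even_or_odd k with ⟨l, hl⟩ | ⟨l, hl⟩
    · subst hl
      have h1 := h l (by omega)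
      rwa [show 2*j+(l+l) = 2*(j+l) by ring, show 2*i'+(l+l) = 2*(i'+l) by ring,
        tm_two_mul, tm_two_mul]
    · subst hl
      have h1 := h l (by omega)
      rw [show 2*j+(2*l+1) = 2*(j+l)+1 by ring, show 2*i'+(2*l+1) = 2*(i'+l)+1 by ring,
        tm_two_mul_add_one, tm_two_mul_add_one, h1]

lemma feqc_even (i' j n : ℕ) : feqc (2*i') (2*j) n ↔ feqc i' j ((n+1)/2) := by
  constructor
  · intro h l hl
    have h1 := h (2*l) (by omega)
    rwa [show 2*j+2*l = 2*(j+l) by ring, show 2*i'+2*l = 2*(i'+l) by ring,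
      tm_two_mul, tm_two_mul] at h1
  · intro h k hk
    rcases Nat.even_or_odd k with ⟨l, hl⟩ | ⟨l, hl⟩
    · subst hl
      have h1 := h l (by omega)
      rwa [show 2*j+(l+l) = 2*(j+l) by ring, show 2*i'+(l+l) = 2*(i'+l) by ring,
        tm_two_mul, tm_two_mul]
    · subst hl
      have h1 := h l (by omega)
      rw [show 2*j+(2*l+1) = 2*(j+l)+1 by ring, show 2*i'+(2*l+1) = 2*(i'+l)+1 by ring,
        tm_two_mul_add_one, tm_two_mul_add_one]
      have b1 := tm_lt_two (j+l); have b2 := tm_lt_two (i'+l)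
      omega

lemma feq_odd (i' j n : ℕ) (hn : 1 ≤ n) : feq (2*i'+1) (2*j+1) n ↔ feq i' j (n/2+1) := by
  constructor
  · intro h l hl
    rcases Nat.eq_zero_or_pos l with rfl | hpos
    · have h1 := h 0 (by omega)
      rw [show 2*j+1+0 = 2*j+1 by ring, show 2*i'+1+0 = 2*i'+1 by ring,
        tm_two_mul_add_one, tm_two_mul_add_one] at h1
      have b1 := tm_lt_two j; have b2 := tm_lt_two i'
      show tm (j+0) = tm (i'+0)
      simp only [Nat.add_zero]
      omega
    · obtain ⟨l', rfl⟩ : ∃ l', l = l' + 1 := ⟨l-1, by omega⟩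
      have h1 := h (2*l'+1) (by omega)
      rwa [show 2*j+1+(2*l'+1) = 2*(j+(l'+1)) by ring,
        show 2*i'+1+(2*l'+1) = 2*(i'+(l'+1)) by ring, tm_two_mul, tm_two_mul] at h1
  · intro h k hk
    rcases Nat.even_or_odd k with ⟨l, hl⟩ | ⟨l, hl⟩
    · subst hl
      have h1 := h l (by omega)
      rw [show 2*j+1+(l+l) = 2*(j+l)+1 by ring, show 2*i'+1+(l+l) = 2*(i'+l)+1 by ring,
        tm_two_mul_add_one, tm_two_mul_add_one, h1]
    · subst hl
      have h1 := h (l+1) (by omega)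
      rwa [show 2*j+1+(2*l+1) = 2*(j+(l+1)) by ring,
        show 2*i'+1+(2*l+1) = 2*(i'+(l+1)) by ring, tm_two_mul, tm_two_mul]

lemma feqc_odd (i' j n : ℕ) (hn : 1 ≤ n) : feqc (2*i'+1) (2*j+1) n ↔ feqc i' j (n/2+1) := by
  constructor
  · intro h l hl
    rcases Nat.eq_zero_or_pos l with rfl | hpos
    · have h1 := h 0 (by omega)
      rw [show 2*j+1+0 = 2*j+1 by ring, show 2*i'+1+0 = 2*i'+1 by ring,
        tm_two_mul_add_one, tm_two_mul_add_one] at h1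
      have b1 := tm_lt_two j; have b2 := tm_lt_two i'
      show tm (j+0) = 1 - tm (i'+0)
      simp only [Nat.add_zero]
      omega
    · obtain ⟨l', rfl⟩ : ∃ l', l = l' + 1 := ⟨l-1, by omega⟩
      have h1 := h (2*l'+1) (by omega)
      rwa [show 2*j+1+(2*l'+1) = 2*(j+(l'+1)) by ring,
        show 2*i'+1+(2*l'+1) = 2*(i'+(l'+1)) by ring, tm_two_mul, tm_two_mul] at h1
  · intro h k hk
    rcases Nat.even_or_odd k with ⟨l, hl⟩ | ⟨l, hl⟩
    · subst hl
      have h1 := h l (by omega)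
      rw [show 2*j+1+(l+l) = 2*(j+l)+1 by ring, show 2*i'+1+(l+l) = 2*(i'+l)+1 by ring,
        tm_two_mul_add_one, tm_two_mul_add_one, h1]
    · subst hl
      have h1 := h (l+1) (by omega)
      rwa [show 2*j+1+(2*l+1) = 2*(j+(l+1)) by ring,
        show 2*i'+1+(2*l+1) = 2*(i'+(l+1)) by ring, tm_two_mul, tm_two_mul]

lemma ABpat_desub_even (i' n : ℕ)
    (hsync : ∀ j, occSet (2*i') n j → j % 2 = 0) :
    ABpat (2*i') n ↔ ABpat i' ((n+1)/2) := by
  have hiff : ∀ j, occSet i' ((n+1)/2) j ↔ occSet (2*i') n (2*j + 0) := by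
    intro j
    simp only [occSet, Nat.add_zero]
    rw [feq_even, feqc_even]
  have hnth : ∀ m, Nat.nth (occSet (2*i') n) m = 2 * Nat.nth (occSet i' ((n+1)/2)) m :=
    fun m => by
      have := nth_shift 0 (by norm_num) (occ_infinite i' ((n+1)/2))
        (fun x hx => hsync x hx) hiff m
      omega
  have hitw : ∀ m, itw (2*i') n m = itw i' ((n+1)/2) m := by
    intro m
    simp only [itw, hnth m]
    exact if_congr (feq_even i' _ n) rfl rfl
  unfold ABpat
  exact forall_congr' fun m => by rw [hitw m]

lemma ABpat_desub_odd (i' n : ℕ) (hn : 1 ≤ n)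
    (hsync : ∀ j, occSet (2*i'+1) n j → j % 2 = 1) :
    ABpat (2*i'+1) n ↔ ABpat i' (n/2+1) := by
  have hiff : ∀ j, occSet i' (n/2+1) j ↔ occSet (2*i'+1) n (2*j + 1) := by
    intro j
    simp only [occSet]
    rw [feq_odd _ _ _ hn, feqc_odd _ _ _ hn]
  have hnth : ∀ m, Nat.nth (occSet (2*i'+1) n) m = 2 * Nat.nth (occSet i' (n/2+1)) m + 1 :=
    fun m => nth_shift 1 (by norm_num) (occ_infinite i' (n/2+1))
        (fun x hx => hsync x hx) hiff m
  have hitw : ∀ m, itw (2*i'+1) n m = itw i' (n/2+1) m := by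
    intro m
    simp only [itw, hnth m]
    exact if_congr (feq_odd i' _ n hn) rfl rfl
  unfold ABpat
  exact forall_congr' fun m => by rw [hitw m]

lemma ABpat_even_iff (i' n : ℕ) (hn4 : 4 ≤ n) : ABpat (2*i') n ↔ ABpat i' ((n+1)/2) :=
  ABpat_desub_even i' n (fun j hj => by have := sync4 hn4 j hj; omega)

lemma ABpat_odd_iff (i' n : ℕ) (hn4 : 4 ≤ n) : ABpat (2*i'+1) n ↔ ABpat i' (n/2+1) :=
  ABpat_desub_odd i' n (by omega) (fun j hj => by have := sync4 hn4 j hj; omega)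

-- ### small feq characterizations
lemma feq_two (i j : ℕ) : feq i j 2 ↔ (tm j = tm i ∧ tm (j+1) = tm (i+1)) := by
  constructor
  · intro h
    exact ⟨by simpa using h 0 (by norm_num), by simpa using h 1 (by norm_num)⟩
  · rintro ⟨h1, h2⟩ k hk
    interval_cases k
    · simpa using h1
    · simpa using h2

lemma feqc_two (i j : ℕ) : feqc i j 2 ↔ (tm j = 1 - tm i ∧ tm (j+1) = 1 - tm (i+1)) := by
  constructor
  · intro h
    exact ⟨by simpa using h 0 (by norm_num), by simpa using h 1 (by norm_num)⟩
  · rintro ⟨h1, h2⟩ k hk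
    interval_cases k
    · simpa using h1
    · simpa using h2

lemma feq_three (i j : ℕ) :
    feq i j 3 ↔ (tm j = tm i ∧ tm (j+1) = tm (i+1) ∧ tm (j+2) = tm (i+2)) := by
  constructor
  · intro h
    exact ⟨by simpa using h 0 (by norm_num), by simpa using h 1 (by norm_num),
      by simpa using h 2 (by norm_num)⟩
  · rintro ⟨h1, h2, h3⟩ k hk
    interval_cases k
    · simpa using h1
    · simpa using h2
    · simpa using h3

lemma feqc_three (i j : ℕ) :
    feqc i j 3 ↔ (tm j = 1 - tm i ∧ tm (j+1) = 1 - tm (i+1) ∧ tm (j+2) = 1 - tm (i+2)) := by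
  constructor
  · intro h
    exact ⟨by simpa using h 0 (by norm_num), by simpa using h 1 (by norm_num),
      by simpa using h 2 (by norm_num)⟩
  · rintro ⟨h1, h2, h3⟩ k hk
    interval_cases k
    · simpa using h1
    · simpa using h2
    · simpa using h3

-- ### numeric values of tm
lemma tm0 : tm 0 = 0 := by norm_num [tm]
lemma tm1 : tm 1 = 1 := by norm_num [tm]
lemma tm2 : tm 2 = 1 := by norm_num [tm]
lemma tm3 : tm 3 = 0 := by norm_num [tm]
lemma tm4 : tm 4 = 1 := by norm_num [tm]
lemma tm5 : tm 5 = 0 := by norm_num [tm]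
lemma tm6 : tm 6 = 0 := by norm_num [tm]
lemma tm7 : tm 7 = 1 := by norm_num [tm]
lemma tm8 : tm 8 = 1 := by norm_num [tm]
lemma tm9 : tm 9 = 0 := by norm_num [tm]
lemma tm10 : tm 10 = 0 := by norm_num [tm]
lemma tm11 : tm 11 = 1 := by norm_num [tm]
lemma tm12 : tm 12 = 0 := by norm_num [tm]

-- ### occurrence sets of the length-2 factors
lemma occ02 (x : ℕ) : occSet 0 2 x ↔ tm (x+1) = 1 - tm x := by
  unfold occSet
  rw [feq_two, feqc_two, tm0, tm1]
  have b1 := tm_lt_two x; have b2 := tm_lt_two (x+1)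
  constructor
  · rintro (⟨h1, h2⟩ | ⟨h1, h2⟩) <;> omega
  · intro h
    rcases (by omega : tm x = 0 ∨ tm x = 1) with h0 | h0
    · exact Or.inl ⟨h0, by omega⟩
    · exact Or.inr ⟨by omega, by omega⟩

lemma occ12 (x : ℕ) : occSet 1 2 x ↔ tm (x+1) = tm x := by
  unfold occSet
  rw [feq_two, feqc_two, tm1, tm2]
  have b1 := tm_lt_two x; have b2 := tm_lt_two (x+1)
  constructor
  · rintro (⟨h1, h2⟩ | ⟨h1, h2⟩) <;> omega
  · intro h
    rcases (by omega : tm x = 0 ∨ tm x = 1) with h0 | h0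
    · exact Or.inr ⟨by omega, by omega⟩
    · exact Or.inl ⟨by omega, by omega⟩


lemma nth_zero_eq_one {p : ℕ → Prop} (h1 : p 1) (h0 : ¬ p 0) : Nat.nth p 0 = 1 := by
  rw [Nat.nth_zero]
  have hle : sInf (setOf p) ≤ 1 := Nat.sInf_le h1
  have hmem : p (sInf (setOf p)) := Nat.sInf_mem ⟨1, h1⟩
  rcases (by omega : sInf (setOf p) = 0 ∨ sInf (setOf p) = 1) with h | h
  · rw [h] at hmem; exact absurd hmem h0
  · exact h

lemma nth_zero_eq_two {p : ℕ → Prop} (h2 : p 2) (h0 : ¬ p 0) (h1 : ¬ p 1) :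
    Nat.nth p 0 = 2 := by
  rw [Nat.nth_zero]
  have hle : sInf (setOf p) ≤ 2 := Nat.sInf_le h2
  have hmem : p (sInf (setOf p)) := Nat.sInf_mem ⟨2, h2⟩
  rcases (by omega : sInf (setOf p) = 0 ∨ sInf (setOf p) = 1 ∨ sInf (setOf p) = 2)
    with h | h | h
  · rw [h] at hmem; exact absurd hmem h0
  · rw [h] at hmem; exact absurd hmem h1
  · exact h

-- ### alternation along the (01/10) occurrence set
lemma ne_alt : ∀ m, tm (Nat.nth (occSet 0 2) m) = m % 2 := by
  intro m
  induction m with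
  | zero =>
    have h0 : occSet 0 2 0 := Or.inl (fun k _ => rfl)
    rw [Nat.nth_zero_of_zero h0, tm0]
  | succ m ih =>
    have hinf := occ_infinite 0 2
    set j := Nat.nth (occSet 0 2) m with hjdef
    set j' := Nat.nth (occSet 0 2) (m+1) with hjdef'
    have hj : occSet 0 2 j := Nat.nth_mem_of_infinite hinf m
    have hj' : occSet 0 2 j' := Nat.nth_mem_of_infinite hinf (m+1)
    have hlt : j < j' := (Nat.nth_lt_nth hinf).2 (Nat.lt_succ_self m)
    have hgap : ∀ x, occSet 0 2 x → x < j' → x ≤ j := fun x hx hxlt =>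
      Nat.le_nth_of_lt_nth_succ hxlt hx
    rw [occ02] at hj hj'
    have bj := tm_lt_two j; have bj1 := tm_lt_two (j+1)
    have bj2 := tm_lt_two (j+2); have bj3 := tm_lt_two (j+3)
    rcases (by omega : j' = j + 1 ∨ j' = j + 2 ∨ j + 3 ≤ j') with h | h | h
    · rw [h]; omega
    · have hn1 : ¬ occSet 0 2 (j+1) := fun hcon => by have := hgap _ hcon (by omega); omega
      rw [occ02, show j+1+1 = j+2 by omega] at hn1
      rw [h]
      omega
    · exfalso
      have hn1 : ¬ occSet 0 2 (j+1) := fun hcon => by have := hgap _ hcon (by omega); omega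
      have hn2 : ¬ occSet 0 2 (j+2) := fun hcon => by have := hgap _ hcon (by omega); omega
      rw [occ02, show j+1+1 = j+2 by omega] at hn1
      rw [occ02, show j+2+1 = j+3 by omega] at hn2
      have q1 : tm (j+1) = tm (j+1+1) := by rw [show j+1+1 = j+2 by omega]; omega
      have q2 : tm (j+2) = tm (j+2+1) := by rw [show j+2+1 = j+3 by omega]; omega
      have o1 := eq_adj_odd q1
      have o2 := eq_adj_odd q2
      omega

lemma abpat_01 : ABpat 0 2 := by
  intro m
  have hinf := occ_infinite 0 2
  have hmem : occSet 0 2 (Nat.nth (occSet 0 2) m) := Nat.nth_mem_of_infinite hinf m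
  have hval := ne_alt m
  rw [occ02] at hmem
  unfold itw
  rw [feq_two, tm0]
  set x := Nat.nth (occSet 0 2) m
  have bx := tm_lt_two x
  have h01 : tm (0+1) = 1 := by norm_num [tm1]
  rw [h01]
  rcases (by omega : m % 2 = 0 ∨ m % 2 = 1) with h | h
  · rw [if_pos (by omega), h]
  · rw [if_neg (by omega), h]

-- ### alternation along the (00/11) occurrence set
lemma occ12_one : occSet 1 2 1 := by rw [occ12, tm2, tm1]

lemma occ12_not_zero : ¬ occSet 1 2 0 := by rw [occ12, tm1, tm0]; omega

lemma eq_alt : ∀ m, tm (Nat.nth (occSet 1 2) m) = (m + 1) % 2 := by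
  intro m
  induction m with
  | zero => rw [nth_zero_eq_one occ12_one occ12_not_zero, tm1]
  | succ m ih =>
    have hinf := occ_infinite 1 2
    have hj : occSet 1 2 (Nat.nth (occSet 1 2) m) := Nat.nth_mem_of_infinite hinf m
    have hj' : occSet 1 2 (Nat.nth (occSet 1 2) (m+1)) :=
      Nat.nth_mem_of_infinite hinf (m+1)
    have hlt : Nat.nth (occSet 1 2) m < Nat.nth (occSet 1 2) (m+1) :=
      (Nat.nth_lt_nth hinf).2 (Nat.lt_succ_self m)
    have hgap : ∀ x, occSet 1 2 x → x < Nat.nth (occSet 1 2) (m+1) →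
        x ≤ Nat.nth (occSet 1 2) m := fun x hx hxlt =>
      Nat.le_nth_of_lt_nth_succ hxlt hx
    rw [occ12] at hj hj'
    have hodd := eq_adj_odd hj.symm
    obtain ⟨s, hs⟩ : ∃ s, Nat.nth (occSet 1 2) m = 2*s+1 := ⟨Nat.nth (occSet 1 2) m / 2, by omega⟩
    rw [hs] at ih hj hlt hgap
    set j' := Nat.nth (occSet 1 2) (m+1) with hj'def
    have hodd' := eq_adj_odd hj'.symm
    have e1 := tm_two_mul_add_one s
    have e2 : tm (2*s+2) = tm (s+1) := by rw [show 2*s+2 = 2*(s+1) by ring, tm_two_mul]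
    have e3 : tm (2*s+3) = 1 - tm (s+1) := by
      rw [show 2*s+3 = 2*(s+1)+1 by ring, tm_two_mul_add_one]
    have e4 : tm (2*s+4) = tm (s+2) := by rw [show 2*s+4 = 2*(s+2) by ring, tm_two_mul]
    have e5 : tm (2*s+5) = 1 - tm (s+2) := by
      rw [show 2*s+5 = 2*(s+2)+1 by ring, tm_two_mul_add_one]
    have e6 : tm (2*s+6) = tm (s+3) := by rw [show 2*s+6 = 2*(s+3) by ring, tm_two_mul]
    have bs := tm_lt_two s; have bs1 := tm_lt_two (s+1)
    have bs2 := tm_lt_two (s+2); have bs3 := tm_lt_two (s+3)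
    rw [show 2*s+1+1 = 2*s+2 by omega] at hj
    rcases (by omega : j' = 2*s+3 ∨ 2*s+5 ≤ j') with h | h
    · rw [h, e3]; omega
    · have hn2 : ¬ occSet 1 2 (2*s+3) := fun hcon => by
        have := hgap _ hcon (by omega); omega
      rw [occ12, show 2*s+3+1 = 2*s+4 by omega] at hn2
      have hocc4 : occSet 1 2 (2*s+5) := by
        rw [occ12, show 2*s+5+1 = 2*s+6 by omega]
        by_contra hcon
        have q1 : tm (s+1) = tm (s+1+1) := by rw [show s+1+1 = s+2 by omega]; omega
        have q2 : tm (s+2) = tm (s+2+1) := by rw [show s+2+1 = s+3 by omega]; omega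
        have o1 := eq_adj_odd q1
        have o2 := eq_adj_odd q2
        omega
      have hle : j' ≤ 2*s+5 := by
        by_contra hcon
        have := hgap _ hocc4 (by omega)
        omega
      have hj5 : j' = 2*s+5 := by omega
      rw [hj5, e5]
      omega

lemma abpat_11 : ABpat 1 2 := by
  intro m
  have hinf := occ_infinite 1 2
  have hmem : occSet 1 2 (Nat.nth (occSet 1 2) m) := Nat.nth_mem_of_infinite hinf m
  have hval := eq_alt m
  rw [occ12] at hmem
  unfold itw
  rw [feq_two, tm1]
  set x := Nat.nth (occSet 1 2) m
  have bx := tm_lt_two x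
  have h11 : tm (1+1) = 1 := by norm_num [tm2]
  rw [h11]
  rcases (by omega : m % 2 = 0 ∨ m % 2 = 1) with h | h
  · rw [if_pos (by omega), h]
  · rw [if_neg (by omega), h]

-- ### the negative base cases
lemma not_abpat_22 : ¬ ABpat 2 2 := by
  intro hAB
  have h0 : occSet 2 2 0 := by
    refine Or.inr ?_
    rw [feqc_two]
    norm_num [tm0, tm1, tm2, tm3]
  have := hAB 0
  unfold itw at this
  rw [Nat.nth_zero_of_zero h0,
    if_neg (by rw [feq_two]; norm_num [tm0, tm1, tm2, tm3])] at this
  simp at this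

lemma not_abpat_52 : ¬ ABpat 5 2 := by
  intro hAB
  have h1 : occSet 5 2 1 := by
    refine Or.inr ?_
    rw [feqc_two]
    norm_num [tm1, tm2, tm5, tm6]
  have h0 : ¬ occSet 5 2 0 := by
    rintro (hf | hc)
    · rw [feq_two] at hf
      norm_num [tm0, tm5, tm1, tm6] at hf
    · rw [feqc_two] at hc
      norm_num [tm0, tm5, tm1, tm6] at hc
  have := hAB 0
  unfold itw at this
  rw [nth_zero_eq_one h1 h0,
    if_neg (by rw [feq_two]; norm_num [tm1, tm2, tm5, tm6])] at this
  simp at this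

lemma occ33_two : occSet 3 3 2 := by
  refine Or.inr ?_
  rw [feqc_three]
  norm_num [tm2, tm3, tm4, tm5]

lemma occ33_not_zero : ¬ occSet 3 3 0 := by
  rintro (hf | hc)
  · rw [feq_three] at hf
    norm_num [tm0, tm3, tm1, tm4, tm2, tm5] at hf
  · rw [feqc_three] at hc
    norm_num [tm0, tm3, tm1, tm4, tm2, tm5] at hc

lemma occ33_not_one : ¬ occSet 3 3 1 := by
  rintro (hf | hc)
  · rw [feq_three] at hf
    norm_num [tm1, tm3, tm2, tm4, tm5] at hf
  · rw [feqc_three] at hc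
    norm_num [tm1, tm3, tm2, tm4, tm5] at hc

lemma not_abpat_33 : ¬ ABpat 3 3 := by
  intro hAB
  have := hAB 0
  unfold itw at this
  rw [nth_zero_eq_two occ33_two occ33_not_zero occ33_not_one,
    if_neg (by rw [feq_three]; norm_num [tm2, tm3, tm4, tm5])] at this
  simp at this

-- ### words
lemma fac_length (i n : ℕ) : (fac i n).length = n := by simp [fac]

lemma getD_map_range (f : ℕ → ℕ) {n k : ℕ} (hk : k < n) :
    ((List.range n).map f).getD k 0 = f k := by
  rw [List.getD_eq_getElem _ _ (by simpa using hk)]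
  simp

lemma fac_getD {i n k : ℕ} (hk : k < n) : (fac i n).getD k 0 = tm (i + k) :=
  getD_map_range _ hk

lemma list_ext_getD (l l' : List ℕ) (h : l.length = l'.length)
    (hg : ∀ k < l.length, l.getD k 0 = l'.getD k 0) : l = l' := by
  apply List.ext_getElem h
  intro k h1 h2
  have := hg k h1
  rwa [List.getD_eq_getElem _ _ h1, List.getD_eq_getElem _ _ h2] at this

lemma fac_eq_iff (i j n : ℕ) : fac j n = fac i n ↔ feq i j n := by
  constructor
  · intro h k hk
    have h2 : (fac j n).getD k 0 = (fac i n).getD k 0 := by rw [h]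
    rwa [fac_getD hk, fac_getD hk] at h2
  · intro h
    refine list_ext_getD _ _ (by rw [fac_length, fac_length]) ?_
    intro k hk
    rw [fac_length] at hk
    rw [fac_getD hk, fac_getD hk]
    exact h k hk

lemma ABpat_congr {i i' n : ℕ} (h : feq i i' n) : ABpat i' n ↔ ABpat i n := by
  have hfeq : ∀ j, feq i' j n ↔ feq i j n := by
    intro j
    constructor
    · intro hf k hk; rw [hf k hk, h k hk]
    · intro hf k hk
      rw [hf k hk, h k hk]
  have hfeqc : ∀ j, feqc i' j n ↔ feqc i j n := by
    intro j
    constructor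
    · intro hf k hk; rw [hf k hk, h k hk]
    · intro hf k hk
      rw [hf k hk, h k hk]
  have hocc : occSet i' n = occSet i n := by
    funext x
    exact propext (or_congr (hfeq x) (hfeqc x))
  have hitw : ∀ m, itw i' n m = itw i n m := by
    intro m
    unfold itw
    rw [hocc]
    exact if_congr (hfeq _) rfl rfl
  unfold ABpat
  exact forall_congr' fun m => by rw [hitw m]

-- ### expansion maps
def expE (y : List ℕ) (n : ℕ) : List ℕ :=
  (List.range n).map (fun k => if k % 2 = 0 then y.getD (k/2) 0 else 1 - y.getD (k/2) 0)

def expO (y : List ℕ) (n : ℕ) : List ℕ :=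
  (List.range n).map (fun k => if k % 2 = 0 then 1 - y.getD (k/2) 0 else y.getD (k/2+1) 0)

lemma expE_fac (i' n : ℕ) : expE (fac i' ((n+1)/2)) n = fac (2*i') n := by
  unfold expE fac
  refine List.map_congr_left ?_
  intro k hk
  rw [List.mem_range] at hk
  rcases Nat.even_or_odd k with ⟨l, hl⟩ | ⟨l, hl⟩
  · have hk2 : k / 2 < (n+1)/2 := by omega
    rw [if_pos (by omega), getD_map_range _ hk2,
      show 2*i' + k = 2*(i' + k/2) by omega, tm_two_mul]
  · have hk2 : k / 2 < (n+1)/2 := by omega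
    rw [if_neg (by omega), getD_map_range _ hk2,
      show 2*i' + k = 2*(i' + k/2) + 1 by omega, tm_two_mul_add_one]

lemma expO_fac (i' n : ℕ) : expO (fac i' (n/2+1)) n = fac (2*i'+1) n := by
  unfold expO fac
  refine List.map_congr_left ?_
  intro k hk
  rw [List.mem_range] at hk
  rcases Nat.even_or_odd k with ⟨l, hl⟩ | ⟨l, hl⟩
  · have hk2 : k / 2 < n/2+1 := by omega
    rw [if_pos (by omega), getD_map_range _ hk2,
      show 2*i' + 1 + k = 2*(i' + k/2) + 1 by omega, tm_two_mul_add_one]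
  · have hk2 : k / 2 + 1 < n/2+1 := by omega
    rw [if_neg (by omega), getD_map_range _ hk2,
      show 2*i' + 1 + k = 2*(i' + (k/2+1)) by omega, tm_two_mul]

-- ### the sets of (AB)^ω factors
def Wset (n : ℕ) : Set (List ℕ) := {w : List ℕ | ∃ i, fac i n = w ∧ ABpat i n}

lemma fcount_eq_Wset (n : ℕ) : fcount n = (Wset n).ncard := rfl

lemma Wset_length {n : ℕ} {w : List ℕ} (hw : w ∈ Wset n) : w.length = n := by
  obtain ⟨i, rfl, -⟩ := hw
  exact fac_length i n

lemma Wset_getD_lt {n : ℕ} {w : List ℕ} (hw : w ∈ Wset n) {k : ℕ} (hk : k < n) :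
    w.getD k 0 < 2 := by
  obtain ⟨i, rfl, -⟩ := hw
  rw [fac_getD hk]
  exact tm_lt_two _

lemma Wset_finite (n : ℕ) : (Wset n).Finite := by
  classical
  have h : ((fun w : List ℕ => w.map (fun x => x == 1)) '' Wset n).Finite := by
    apply Set.Finite.subset (List.finite_length_eq Bool n)
    rintro _ ⟨w, hw, rfl⟩
    simp [Set.mem_setOf_eq, Wset_length hw]
  refine Set.Finite.of_finite_image h ?_
  intro w hw w' hw' hmap
  have hlen : w.length = w'.length := by
    have := congrArg List.length hmap
    simpa using this
  refine list_ext_getD _ _ hlen ?_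
  intro k hk
  have hkw : k < n := by rwa [Wset_length hw] at hk
  have h1 : (w.map (fun x => x == 1)).getD k false = (w'.map (fun x => x == 1)).getD k false :=
    congrArg (fun l => l.getD k false) hmap
  rw [List.getD_eq_getElem _ _ (by simpa using hk),
    List.getD_eq_getElem _ _ (by rw [List.length_map, ← hlen]; exact hk)] at h1
  simp only [List.getElem_map] at h1
  have hw2 := Wset_getD_lt hw hkw
  have hw2' := Wset_getD_lt hw' hkw
  rw [List.getD_eq_getElem _ _ hk, List.getD_eq_getElem _ _ (hlen ▸ hk)]
  rw [List.getD_eq_getElem _ _ hk] at hw2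
  rw [List.getD_eq_getElem _ _ (hlen ▸ hk)] at hw2'
  rcases (by omega : w[k] = 0 ∨ w[k] = 1) with h0 | h0 <;>
    rcases (by omega : w'[k]'(hlen ▸ hk) = 0 ∨ w'[k]'(hlen ▸ hk) = 1) with h0' | h0' <;>
      simp [h0, h0'] at h1 ⊢ <;> omega

lemma expE_injOn (n : ℕ) (hn : 1 ≤ n) : Set.InjOn (fun y => expE y n) (Wset ((n+1)/2)) := by
  intro y hy y' hy' h
  have hly := Wset_length hy
  have hly' := Wset_length hy'
  refine list_ext_getD _ _ (by rw [hly, hly']) ?_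
  intro k hk
  rw [hly] at hk
  have h2k : 2*k < n := by omega
  have := congrArg (fun l => l.getD (2*k) 0) h
  simp only [expE] at this
  rw [getD_map_range _ h2k, getD_map_range _ h2k] at this
  rw [if_pos (by omega), if_pos (by omega)] at this
  simpa [Nat.mul_div_cancel_left k (by norm_num : 0 < 2)] using this

lemma expO_injOn (n : ℕ) (hn : 1 ≤ n) : Set.InjOn (fun y => expO y n) (Wset (n/2+1)) := by
  intro y hy y' hy' h
  have hly := Wset_length hy
  have hly' := Wset_length hy'
  refine list_ext_getD _ _ (by rw [hly, hly']) ?_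
  intro k hk
  rw [hly] at hk
  rcases Nat.eq_zero_or_pos k with rfl | hpos
  · have h0 : (0:ℕ) < n := by omega
    have := congrArg (fun l => l.getD 0 0) h
    simp only [expO] at this
    rw [getD_map_range _ h0, getD_map_range _ h0] at this
    rw [if_pos (by omega), if_pos (by omega)] at this
    simp only [Nat.zero_div] at this
    have b := Wset_getD_lt hy (show 0 < n/2+1 by omega)
    have b' := Wset_getD_lt hy' (show 0 < n/2+1 by omega)
    omega
  · have h2k : 2*k - 1 < n := by omega
    have := congrArg (fun l => l.getD (2*k-1) 0) h
    simp only [expO] at this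
    rw [getD_map_range _ h2k, getD_map_range _ h2k] at this
    rw [if_neg (by omega), if_neg (by omega)] at this
    have hdiv : (2*k-1)/2 + 1 = k := by omega
    rwa [hdiv] at this

lemma Wset_split (n : ℕ) (hn : 4 ≤ n) :
    Wset n = (fun y => expE y n) '' Wset ((n+1)/2) ∪ (fun y => expO y n) '' Wset (n/2+1) := by
  ext w
  constructor
  · rintro ⟨i, hfac, hA⟩
    rcases Nat.even_or_odd i with ⟨i', hi⟩ | ⟨i', hi⟩
    · left
      refine ⟨fac i' ((n+1)/2), ⟨i', rfl, ?_⟩, ?_⟩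
      · exact (ABpat_even_iff i' n hn).1 (by rwa [show 2*i' = i by omega])
      · show expE (fac i' ((n+1)/2)) n = w
        rw [expE_fac, show 2*i' = i by omega]
        exact hfac
    · right
      refine ⟨fac i' (n/2+1), ⟨i', rfl, ?_⟩, ?_⟩
      · exact (ABpat_odd_iff i' n hn).1 (by rwa [show 2*i'+1 = i by omega])
      · show expO (fac i' (n/2+1)) n = w
        rw [expO_fac, show 2*i'+1 = i by omega]
        exact hfac
  · rintro (⟨y, ⟨i', rfl, hA⟩, rfl⟩ | ⟨y, ⟨i', rfl, hA⟩, rfl⟩)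
    · exact ⟨2*i', (expE_fac i' n).symm, (ABpat_even_iff i' n hn).2 hA⟩
    · exact ⟨2*i'+1, (expO_fac i' n).symm, (ABpat_odd_iff i' n hn).2 hA⟩

lemma Wset_disj (n : ℕ) (hn : 4 ≤ n) :
    Disjoint ((fun y => expE y n) '' Wset ((n+1)/2)) ((fun y => expO y n) '' Wset (n/2+1)) := by
  rw [Set.disjoint_left]
  rintro w ⟨y, ⟨i', rfl, hA⟩, rfl⟩ ⟨y', ⟨j', rfl, hA'⟩, hw⟩
  have h1 : expE (fac i' ((n+1)/2)) n = fac (2*i') n := expE_fac i' n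
  have h2 : expO (fac j' (n/2+1)) n = fac (2*j'+1) n := expO_fac j' n
  have hw' : expO (fac j' (n/2+1)) n = expE (fac i' ((n+1)/2)) n := hw
  have heq : fac (2*j'+1) n = fac (2*i') n := by rw [← h1, ← h2, hw']
  have hfeq : feq (2*i') (2*j'+1) n := (fac_eq_iff _ _ _).1 heq
  have := sync4 hn (2*j'+1) (Or.inl hfeq)
  omega

lemma fcount_rec (n : ℕ) (hn : 4 ≤ n) :
    fcount n = fcount ((n+1)/2) + fcount (n/2+1) := by
  rw [fcount_eq_Wset, fcount_eq_Wset, fcount_eq_Wset, Wset_split n hn,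
    Set.ncard_union_eq (Wset_disj n hn) ((Wset_finite _).image _) ((Wset_finite _).image _),
    Set.ncard_image_of_injOn (expE_injOn n (by omega)),
    Set.ncard_image_of_injOn (expO_injOn n (by omega))]

-- ### explicit small factors
lemma fac_two (i : ℕ) : fac i 2 = [tm i, tm (i+1)] := by
  simp [fac, List.range_succ]

lemma fac_three (i : ℕ) : fac i 3 = [tm i, tm (i+1), tm (i+2)] := by
  simp [fac, List.range_succ]

-- ### fcount 2 = 2
lemma fcount_two : fcount 2 = 2 := by
  rw [fcount_eq_Wset]
  have hset : Wset 2 = {[0,1], [1,1]} := by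
    ext w
    constructor
    · rintro ⟨i, hfac, hA⟩
      have b0 := tm_lt_two i; have b1 := tm_lt_two (i+1)
      rcases (by omega : tm i = 0 ∨ tm i = 1) with h0 | h0 <;>
        rcases (by omega : tm (i+1) = 0 ∨ tm (i+1) = 1) with h1 | h1
      · -- (0,0) : equivalent to position 5, not AB
        exfalso
        have hfeq : feq 5 i 2 := by
          rw [feq_two]
          norm_num [tm5, tm6]
          omega
        exact not_abpat_52 ((ABpat_congr hfeq).1 hA)
      · -- (0,1)
        left
        rw [← hfac, fac_two, h0, h1]
      · -- (1,0) : equivalent to position 2, not AB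
        exfalso
        have hfeq : feq 2 i 2 := by
          rw [feq_two]
          norm_num [tm2, tm3]
          omega
        exact not_abpat_22 ((ABpat_congr hfeq).1 hA)
      · -- (1,1)
        right
        rw [← hfac, fac_two, h0, h1]
        rfl
    · rintro (rfl | rfl)
      · exact ⟨0, by rw [fac_two]; norm_num [tm0, tm1], abpat_01⟩
      · exact ⟨1, by rw [fac_two]; norm_num [tm1, tm2], abpat_11⟩
  rw [hset]
  exact Set.ncard_pair (by simp)

-- ### the remaining length-3 pattern facts
lemma abpat_03 : ABpat 0 3 := by
  have hsync : ∀ j, occSet (2*0) 3 j → j % 2 = 0 := by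
    intro j hj
    have := sync_pair (i := 2*0) (n := 3)
      ⟨1, by omega, by norm_num [tm1, tm2]⟩ j hj
    omega
  have h := ABpat_desub_even 0 3 hsync
  norm_num at h
  exact h.2 abpat_01

lemma abpat_13 : ABpat 1 3 := by
  have hsync : ∀ j, occSet (2*0+1) 3 j → j % 2 = 1 := by
    intro j hj
    have := sync_pair (i := 2*0+1) (n := 3)
      ⟨0, by omega, by norm_num [tm1, tm2]⟩ j hj
    omega
  have h := ABpat_desub_odd 0 3 (by omega) hsync
  norm_num at h
  exact h.2 abpat_01

lemma not_abpat_43 : ¬ ABpat 4 3 := by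
  have hsync : ∀ j, occSet (2*2) 3 j → j % 2 = 0 := by
    intro j hj
    have := sync_pair (i := 2*2) (n := 3)
      ⟨1, by omega, by norm_num [tm5, tm6]⟩ j hj
    omega
  have h := ABpat_desub_even 2 3 hsync
  norm_num at h
  exact fun hc => not_abpat_22 (h.1 hc)

lemma not_abpat_53 : ¬ ABpat 5 3 := by
  have hsync : ∀ j, occSet (2*2+1) 3 j → j % 2 = 1 := by
    intro j hj
    have := sync_pair (i := 2*2+1) (n := 3)
      ⟨0, by omega, by norm_num [tm5, tm6]⟩ j hj
    omega
  have h := ABpat_desub_odd 2 3 (by omega) hsync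
  norm_num at h
  exact fun hc => not_abpat_22 (h.1 hc)

-- ### ¬ ABpat 2 3, via counting occurrences below 10
lemma occ23_two : occSet 2 3 2 := Or.inl (fun k _ => rfl)
lemma occ23_three : occSet 2 3 3 := by
  refine Or.inr ?_
  rw [feqc_three]
  norm_num [tm2, tm3, tm4, tm5]
lemma occ23_ten : occSet 2 3 10 := by
  refine Or.inr ?_
  rw [feqc_three]
  norm_num [tm2, tm3, tm4, tm10, tm11, tm12]

lemma occ23_not : ∀ x, x ∈ ({0, 1, 4, 5, 6, 7, 8, 9} : Finset ℕ) → ¬ occSet 2 3 x := by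
  intro x hx
  fin_cases hx <;>
  · rintro (hf | hc)
    · rw [feq_three] at hf
      norm_num [tm0, tm1, tm2, tm3, tm4, tm5, tm6, tm7, tm8, tm9, tm10, tm11] at hf
    · rw [feqc_three] at hc
      norm_num [tm0, tm1, tm2, tm3, tm4, tm5, tm6, tm7, tm8, tm9, tm10, tm11] at hc

lemma not_abpat_23 : ¬ ABpat 2 3 := by
  classical
  intro hAB
  have hfilter : Finset.filter (occSet 2 3) (Finset.range 10) = {2, 3} := by
    ext x
    simp only [Finset.mem_filter, Finset.mem_range, Finset.mem_insert, Finset.mem_singleton]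
    constructor
    · rintro ⟨hx, hp⟩
      interval_cases x
      · exact absurd hp (occ23_not 0 (by norm_num))
      · exact absurd hp (occ23_not 1 (by norm_num))
      · left; rfl
      · right; rfl
      · exact absurd hp (occ23_not 4 (by norm_num))
      · exact absurd hp (occ23_not 5 (by norm_num))
      · exact absurd hp (occ23_not 6 (by norm_num))
      · exact absurd hp (occ23_not 7 (by norm_num))
      · exact absurd hp (occ23_not 8 (by norm_num))
      · exact absurd hp (occ23_not 9 (by norm_num))
    · rintro (rfl | rfl)
      · exact ⟨by norm_num, occ23_two⟩
      · exact ⟨by norm_num, occ23_three⟩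
  have hcount : Nat.count (occSet 2 3) 10 = 2 := by
    rw [Nat.count_eq_card_filter_range, hfilter]
    rfl
  have hnth : Nat.nth (occSet 2 3) 2 = 10 := by
    have h := Nat.nth_count occ23_ten
    rwa [hcount] at h
  have := hAB 2
  unfold itw at this
  rw [hnth, if_neg (by
    rw [feq_three]
    norm_num [tm2, tm3, tm4, tm10, tm11, tm12])] at this
  simp at this

-- ### fcount 3 = 2
lemma fcount_three : fcount 3 = 2 := by
  rw [fcount_eq_Wset]
  have hset : Wset 3 = {[0,1,1], [1,1,0]} := by
    ext w
    constructor
    · rintro ⟨i, hfac, hA⟩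
      have b0 := tm_lt_two i; have b1 := tm_lt_two (i+1); have b2 := tm_lt_two (i+2)
      rcases (by omega : tm i = 0 ∨ tm i = 1) with h0 | h0 <;>
        rcases (by omega : tm (i+1) = 0 ∨ tm (i+1) = 1) with h1 | h1 <;>
          rcases (by omega : tm (i+2) = 0 ∨ tm (i+2) = 1) with h2 | h2
      · -- (0,0,0)
        exfalso
        have q1 : tm i = tm (i+1) := by omega
        have q2 : tm (i+1) = tm (i+1+1) := by rw [show i+1+1 = i+2 by omega]; omega
        have := eq_adj_odd q1; have := eq_adj_odd q2
        omega
      · -- (0,0,1) ~ position 5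
        exfalso
        have hfeq : feq 5 i 3 := by
          rw [feq_three]
          norm_num [tm5, tm6, tm7]
          omega
        exact not_abpat_53 ((ABpat_congr hfeq).1 hA)
      · -- (0,1,0) ~ position 3
        exfalso
        have hfeq : feq 3 i 3 := by
          rw [feq_three]
          norm_num [tm3, tm4, tm5]
          omega
        exact not_abpat_33 ((ABpat_congr hfeq).1 hA)
      · -- (0,1,1)
        left
        rw [← hfac, fac_three, h0, h1, h2]
      · -- (1,0,0) ~ position 4
        exfalso
        have hfeq : feq 4 i 3 := by
          rw [feq_three]
          norm_num [tm4, tm5, tm6]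
          omega
        exact not_abpat_43 ((ABpat_congr hfeq).1 hA)
      · -- (1,0,1) ~ position 2
        exfalso
        have hfeq : feq 2 i 3 := by
          rw [feq_three]
          norm_num [tm2, tm3, tm4]
          omega
        exact not_abpat_23 ((ABpat_congr hfeq).1 hA)
      · -- (1,1,0)
        right
        rw [← hfac, fac_three, h0, h1, h2]
        rfl
      · -- (1,1,1)
        exfalso
        have q1 : tm i = tm (i+1) := by omega
        have q2 : tm (i+1) = tm (i+1+1) := by rw [show i+1+1 = i+2 by omega]; omega
        have := eq_adj_odd q1; have := eq_adj_odd q2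
        omega
    · rintro (rfl | rfl)
      · exact ⟨0, by rw [fac_three]; norm_num [tm0, tm1, tm2], abpat_03⟩
      · exact ⟨1, by rw [fac_three]; norm_num [tm1, tm2, tm3], abpat_13⟩
  rw [hset]
  exact Set.ncard_pair (by simp)

/-- f(n+1) = 2·A006165(n) for n ≥ 1. -/
theorem tm_fcount_A006165 (a : ℕ → ℕ)
    (h1 : a 1 = 1) (h2 : a 2 = 1)
    (he : ∀ n, 2 ≤ n → a (2 * n) = 2 * a n)
    (ho : ∀ n, 1 ≤ n → a (2 * n + 1) = a (n + 1) + a n) :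
    ∀ n, 1 ≤ n → fcount (n + 1) = 2 * a n := by
  intro n
  induction n using Nat.strong_induction_on with
  | _ n ih =>
    intro hn
    rcases (by omega : n = 1 ∨ n = 2 ∨ 3 ≤ n) with rfl | rfl | h3
    · rw [fcount_two, h1]
    · rw [fcount_three, h2]
    · rw [fcount_rec (n+1) (by omega)]
      rcases Nat.even_or_odd n with ⟨r, hr⟩ | ⟨r, hr⟩
      · -- n = 2r, r ≥ 2
        have hr2 : 2 ≤ r := by omega
        have e1 : (n+1+1)/2 = r+1 := by omega
        have e2 : (n+1)/2 + 1 = r+1 := by omega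
        rw [e1, e2, ih r (by omega) (by omega), show n = 2*r by omega, he r hr2]
        ring
      · -- n = 2r+1, r ≥ 1
        have hr1 : 1 ≤ r := by omega
        have e1 : (n+1+1)/2 = r+1 := by omega
        have e2 : (n+1)/2 + 1 = r+2 := by omega
        rw [e1, e2, ih r (by omega) (by omega),
          ih (r+1) (by omega) (by omega), show n = 2*r+1 by omega, ho r hr1]
        ring
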